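/- arXiv:1403.3109 — 3 statements merged into one kernel-verified Lean document; each statement's English description precedes it below -/
import Mathlib

section
/- In the discrete support-recovery model, let T be the true salient K-set and T′ another K-set with |T \ T′| = i (1 ≤ i ≤ K). Fix a realization θ^N = t, X^N_T = x (an N×K matrix of columns indexed by T), and Y^N = y with P(y | x) > 0. Then for every s > 0, the conditional probability, given (X^N_T = x, Y^N = y, θ^N = t), that P(Y^N | X^N_{T′}) ≥ P(Y^N | X^N_T) is at most Σ_{x′ ∈ 𝒳^{N×i}} Q^{⊗}(x′ | t) · ( P(y | (x_{T∩T′}, x′)) / P(y | x) )^s, where x_{T∩T′} denotes the N×(K−i) submatrix of x consisting of the columns indexed by T∩T′ and (x_{T∩T′}, x′) the N×K matrix obtained by adjoining the columns x′. -/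
open Finset

noncomputable section

variable {𝒳 𝒴 Θ : Type}

/-- The i.i.d. product pmf of the latent parameters over `N` samples. -/
def prodPMF (N : ℕ) (pri : Θ → ℝ) (t : Fin N → Θ) : ℝ := ∏ n, pri (t n)

/-- The conditionally i.i.d. pmf of an `N × m` matrix of variables given latent parameters. -/
def prodQ (N m : ℕ) (Q : Θ → 𝒳 → ℝ) (t : Fin N → Θ) (x : Fin N → Fin m → 𝒳) : ℝ :=
  ∏ n, ∏ k, Q (t n) (x n k)

/-- Replace the columns of the full matrix `x` indexed by the `i`-element set `A` by the
columns of the `N × i` matrix `x'` (in increasing order of the indices), keeping all other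
columns of `x`. -/
def mergeCols {𝒳 : Type} {D N i : ℕ} (A : Finset (Fin D)) (hA : A.card = i)
    (x : Fin N → Fin D → 𝒳) (x' : Fin N → Fin i → 𝒳) : Fin N → Fin D → 𝒳 :=
  fun n j => if h : j ∈ A then x' n ((A.orderIsoOfFin hA).symm ⟨j, h⟩) else x n j

/-! Chernoff's trick: on the event in question the indicator `1[P(y | x_T) ≤ P(y | z_{T'})]` is
at most `(P(y | z_{T'}) / P(y | x_T))^s`. Given `X_T = x` and `θ = t`, the remaining columns are
independent with law `Q(· | t)`, and the bound depends on them only through the `i` columns in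
`T' \ T`; summing out all other columns leaves the sum over `x'`. -/

lemma sum_pinned_mul_prodQ [Fintype 𝒳] [DecidableEq 𝒳] {D N : ℕ} {Q : Θ → 𝒳 → ℝ}
    (hQ1 : ∀ θ, ∑ a, Q θ a = 1) (t : Fin N → Θ) (B : Finset (Fin D)) (w : Fin N → Fin D → 𝒳) :
    ∑ z : Fin N → Fin D → 𝒳,
      (if ∀ n, ∀ j ∈ B, z n j = w n j then (1:ℝ) else 0) * prodQ N D Q t z
      = ∏ j ∈ B, ∏ n, Q (t n) (w n j) := by
  set g : Fin N → Fin D → 𝒳 → ℝ := fun n j a =>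
    (if j ∈ B → a = w n j then 1 else 0) * Q (t n) a
  have hcol : ∀ n j, ∑ a, g n j a = if j ∈ B then Q (t n) (w n j) else 1 := by
    intro n j
    by_cases hj : j ∈ B <;> simp [g, hj, hQ1]
  calc _ = ∑ z : Fin N → Fin D → 𝒳, ∏ n, ∏ j, g n j (z n j) := by
        refine sum_congr rfl fun z _ => ?_
        simp only [g, prodQ, prod_mul_distrib, prod_boole, mem_univ, forall_const]
    _ = ∏ n, ∏ j, ∑ a, g n j a := by simp only [Fintype.prod_sum]
    _ = ∏ j ∈ B, ∏ n, Q (t n) (w n j) := by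
        simp only [hcol, Fintype.prod_ite_mem]
        exact prod_comm

lemma prod_eq_prod_orderEmbOfFin {α M : Type} [LinearOrder α] [CommMonoid M] {A : Finset α}
    {i : ℕ} (hA : A.card = i) (g : α → M) :
    ∏ j ∈ A, g j = ∏ k, g (A.orderEmbOfFin hA k) := by
  rw [← prod_coe_sort A, ← (A.orderIsoOfFin hA).toEquiv.prod_comp]
  rfl

section
variable {D N i : ℕ} {A : Finset (Fin D)} (hA : A.card = i)

lemma mergeCols_of_notMem (x : Fin N → Fin D → 𝒳) (x' : Fin N → Fin i → 𝒳) {j : Fin D}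
    (hj : j ∉ A) (n : Fin N) : mergeCols A hA x x' n j = x n j :=
  dif_neg hj

lemma mergeCols_orderEmbOfFin (x : Fin N → Fin D → 𝒳) (x' : Fin N → Fin i → 𝒳) (n : Fin N)
    (k : Fin i) : mergeCols A hA x x' n (A.orderEmbOfFin hA k) = x' n k := by
  have hk : (⟨A.orderEmbOfFin hA k, A.orderEmbOfFin_mem hA k⟩ : A) = A.orderIsoOfFin hA k := rfl
  simp only [mergeCols, dif_pos (A.orderEmbOfFin_mem hA k), hk, OrderIso.symm_apply_apply]

lemma mergeCols_cols_of_mem (x z : Fin N → Fin D → 𝒳) {j : Fin D} (hj : j ∈ A)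
    (n : Fin N) : mergeCols A hA x (fun n k => z n (A.orderEmbOfFin hA k)) n j = z n j := by
  obtain ⟨k, rfl⟩ : j ∈ Set.range (A.orderEmbOfFin hA) := by simpa using hj
  exact mergeCols_orderEmbOfFin hA x _ n k

variable {T : Finset (Fin D)} (hTA : Disjoint T A)
include hTA

lemma forall_eq_mergeCols_iff (x z : Fin N → Fin D → 𝒳) (x' : Fin N → Fin i → 𝒳) :
    (∀ n, ∀ j ∈ T ∪ A, z n j = mergeCols A hA x x' n j) ↔
      (∀ n, ∀ j ∈ T, z n j = x n j) ∧ (fun n k => z n (A.orderEmbOfFin hA k)) = x' := by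
  constructor
  · intro h
    refine ⟨fun n j hj => ?_, funext fun n => funext fun k => ?_⟩
    · rw [h n j (mem_union_left _ hj), mergeCols_of_notMem hA x x' (disjoint_left.1 hTA hj)]
    · rw [h n _ (mem_union_right _ (A.orderEmbOfFin_mem hA k)), mergeCols_orderEmbOfFin]
  · rintro ⟨hT, rfl⟩ n j hj
    rcases mem_union.1 hj with hj | hj
    · rw [hT n j hj, mergeCols_of_notMem hA x _ (disjoint_left.1 hTA hj)]
    · rw [mergeCols_cols_of_mem hA x z hj]

lemma prod_union_mergeCols {M : Type} [CommMonoid M] (f : (Fin N → 𝒳) → M)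
    (x : Fin N → Fin D → 𝒳) (x' : Fin N → Fin i → 𝒳) :
    ∏ j ∈ T ∪ A, f (fun n => mergeCols A hA x x' n j) =
      (∏ j ∈ T, f (fun n => x n j)) * ∏ k, f (fun n => x' n k) := by
  rw [prod_union hTA, prod_eq_prod_orderEmbOfFin hA]
  congr 1
  · exact prod_congr rfl fun j hj => by
      simp only [mergeCols_of_notMem hA x x' (disjoint_left.1 hTA hj)]
  · simp only [mergeCols_orderEmbOfFin]
end

lemma sum_pinned_mul_prodQ_mul [Fintype 𝒳] [DecidableEq 𝒳] {D N i : ℕ} {Q : Θ → 𝒳 → ℝ}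
    (hQ1 : ∀ θ, ∑ a, Q θ a = 1) (t : Fin N → Θ) {T A : Finset (Fin D)} (hA : A.card = i)
    (hTA : Disjoint T A) (x : Fin N → Fin D → 𝒳) (F : (Fin N → Fin i → 𝒳) → ℝ) :
    ∑ z : Fin N → Fin D → 𝒳, (if ∀ n, ∀ j ∈ T, z n j = x n j then (1:ℝ) else 0) *
        prodQ N D Q t z * F (fun n k => z n (A.orderEmbOfFin hA k)) =
      (∏ j ∈ T, ∏ n, Q (t n) (x n j)) * ∑ x' : Fin N → Fin i → 𝒳, prodQ N i Q t x' * F x' := by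
  calc _ = ∑ z : Fin N → Fin D → 𝒳, ∑ x' : Fin N → Fin i → 𝒳,
        (if ∀ n, ∀ j ∈ T ∪ A, z n j = mergeCols A hA x x' n j then (1:ℝ) else 0) *
          prodQ N D Q t z * F x' := by
        refine sum_congr rfl fun z _ => ?_
        simp only [forall_eq_mergeCols_iff hA hTA]
        by_cases hz : ∀ n, ∀ j ∈ T, z n j = x n j
        · simp [iff_true_intro hz]
        · simp [hz]
    _ = ∑ x' : Fin N → Fin i → 𝒳, F x' * ∏ j ∈ T ∪ A, ∏ n, Q (t n) (mergeCols A hA x x' n j) := by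
        rw [sum_comm]
        refine sum_congr rfl fun x' _ => ?_
        rw [← sum_pinned_mul_prodQ hQ1, mul_sum]
        exact sum_congr rfl fun z _ => by ring
    _ = _ := by
        simp only [prod_union_mergeCols hA hTA (fun c => ∏ n, Q (t n) (c n)), mul_sum, prodQ,
          prod_comm (s := univ (α := Fin i))]
        exact sum_congr rfl fun x' _ => by ring

lemma ite_le_rpow_div {a b s : ℝ} (ha : 0 < a) (hb : 0 ≤ b) (hs : 0 ≤ s) :
    (if a ≤ b then (1:ℝ) else 0) ≤ (b / a) ^ s := by
  split_ifs with hab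
  · exact Real.one_le_rpow ((one_le_div ha).2 hab) hs
  · exact Real.rpow_nonneg (div_nonneg hb ha.le) s

section
variable {D K N i : ℕ} {Q : Θ → 𝒳 → ℝ} {P : (Fin N → Fin K → 𝒳) → (Fin N → 𝒴) → ℝ}
  {T : Finset (Fin D)} (hT : T.card = K) (x : Fin N → Fin D → 𝒳) (y : Fin N → 𝒴)
  (t : Fin N → Θ) (c : ℝ) (z : Fin N → Fin D → 𝒳)

lemma ite_pinned_mul_likelihood_eq [DecidableEq 𝒳] :
    (if ∀ n, ∀ j ∈ T, z n j = x n j then (1:ℝ) else 0) *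
      (c * (prodQ N D Q t z * P (fun n k => z n (T.orderEmbOfFin hT k)) y)) =
      c * P (fun n k => x n (T.orderEmbOfFin hT k)) y *
        ((if ∀ n, ∀ j ∈ T, z n j = x n j then 1 else 0) * prodQ N D Q t z) := by
  split_ifs with hz
  · simp only [fun n k => hz n _ (T.orderEmbOfFin_mem hT k)]
    ring
  · simp

lemma ite_error_mul_likelihood_le [DecidableEq 𝒳] {T' : Finset (Fin D)} (hT' : T'.card = K)
    (hT'T : (T' \ T).card = i) (hP0 : ∀ x y, 0 ≤ P x y)
    (hpos : 0 < P (fun n k => x n (T.orderEmbOfFin hT k)) y) {s : ℝ} (hs : 0 ≤ s) (hc : 0 ≤ c)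
    (hQz : 0 ≤ prodQ N D Q t z) :
    (if (∀ n, ∀ j ∈ T, z n j = x n j) ∧
        P (fun n k => z n (T.orderEmbOfFin hT k)) y ≤
          P (fun n k => z n (T'.orderEmbOfFin hT' k)) y then (1:ℝ) else 0) *
      (c * (prodQ N D Q t z * P (fun n k => z n (T.orderEmbOfFin hT k)) y)) ≤
      c * P (fun n k => x n (T.orderEmbOfFin hT k)) y *
        ((if ∀ n, ∀ j ∈ T, z n j = x n j then 1 else 0) * prodQ N D Q t z *
          (P (fun n k => mergeCols (T' \ T) hT'T x
              (fun n k => z n ((T' \ T).orderEmbOfFin hT'T k)) n (T'.orderEmbOfFin hT' k)) y /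
            P (fun n k => x n (T.orderEmbOfFin hT k)) y) ^ s) := by
  by_cases hz : ∀ n, ∀ j ∈ T, z n j = x n j
  · have hzT' : (fun n k => z n (T'.orderEmbOfFin hT' k)) = fun n k =>
        mergeCols (T' \ T) hT'T x (fun n k => z n ((T' \ T).orderEmbOfFin hT'T k)) n
          (T'.orderEmbOfFin hT' k) :=
      funext fun n => funext fun k =>
        (forall_eq_mergeCols_iff hT'T disjoint_sdiff x z _).2 ⟨hz, rfl⟩ n _
          (by simp [T'.orderEmbOfFin_mem hT' k])
    simp only [iff_true_intro hz, true_and, if_true, hzT',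
      fun n k => hz n _ (T.orderEmbOfFin_mem hT k)]
    calc _ = (if _ ≤ _ then (1:ℝ) else 0) *
          (c * P (fun n k => x n (T.orderEmbOfFin hT k)) y * prodQ N D Q t z) := by ring
      _ ≤ _ * (c * P (fun n k => x n (T.orderEmbOfFin hT k)) y * prodQ N D Q t z) :=
          mul_le_mul_of_nonneg_right (ite_le_rpow_div hpos (hP0 _ _) hs)
            (mul_nonneg (mul_nonneg hc hpos.le) hQz)
      _ = _ := by ring
  · simp [hz]
end

theorem statement1_general
    [Fintype 𝒳] [DecidableEq 𝒳]
    (D K N i : ℕ)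
    (pri : Θ → ℝ) (hpri0 : ∀ t, 0 ≤ pri t)
    (Q : Θ → 𝒳 → ℝ) (hQ0 : ∀ t x, 0 ≤ Q t x) (hQ1 : ∀ t, ∑ x, Q t x = 1)
    (P : (Fin N → Fin K → 𝒳) → (Fin N → 𝒴) → ℝ)
    (hP0 : ∀ x y, 0 ≤ P x y)
    (T T' : Finset (Fin D)) (hT : T.card = K) (hT' : T'.card = K)
    (hT'T : (T' \ T).card = i)
    (t : Fin N → Θ) (x : Fin N → Fin D → 𝒳) (y : Fin N → 𝒴)
    (hpos : 0 < P (fun n k => x n (T.orderEmbOfFin hT k)) y)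
    (s : ℝ) (hs : 0 < s) :
    (∑ z : Fin N → Fin D → 𝒳,
        (if (∀ n, ∀ j ∈ T, z n j = x n j) ∧
              P (fun n k => z n (T.orderEmbOfFin hT k)) y ≤
                P (fun n k => z n (T'.orderEmbOfFin hT' k)) y then (1:ℝ) else 0) *
          (prodPMF N pri t * (prodQ N D Q t z *
            P (fun n k => z n (T.orderEmbOfFin hT k)) y))) /
      (∑ z : Fin N → Fin D → 𝒳,
        (if (∀ n, ∀ j ∈ T, z n j = x n j) then (1:ℝ) else 0) *
          (prodPMF N pri t * (prodQ N D Q t z *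
            P (fun n k => z n (T.orderEmbOfFin hT k)) y))) ≤
    ∑ x' : Fin N → Fin i → 𝒳, prodQ N i Q t x' *
      (P (fun n k => mergeCols (T' \ T) hT'T x x' n (T'.orderEmbOfFin hT' k)) y /
        P (fun n k => x n (T.orderEmbOfFin hT k)) y) ^ s := by
  set C := P (fun n k => x n (T.orderEmbOfFin hT k)) y
  have hprodQ : ∀ m (z : Fin N → Fin m → 𝒳), 0 ≤ prodQ N m Q t z := fun m z =>
    prod_nonneg fun n _ => prod_nonneg fun k _ => hQ0 _ _
  have hc : 0 ≤ prodPMF N pri t := prod_nonneg fun n _ => hpri0 _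
  have hden := fun z => ite_pinned_mul_likelihood_eq (Q := Q) (P := P) hT x y t (prodPMF N pri t) z
  rw [sum_congr rfl fun z _ => hden z, ← mul_sum, sum_pinned_mul_prodQ hQ1]
  refine div_le_of_le_mul₀
    (mul_nonneg (mul_nonneg hc hpos.le) (prod_nonneg fun j _ => prod_nonneg fun n _ => hQ0 _ _))
    (sum_nonneg fun x' _ => mul_nonneg (hprodQ i x')
      (Real.rpow_nonneg (div_nonneg (hP0 _ _) hpos.le) s)) ?_
  calc _ ≤ _ := sum_le_sum fun z _ => ite_error_mul_likelihood_le hT x y t _ z hT' hT'T hP0 hpos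
        hs.le hc (hprodQ D z)
    _ = _ := by
      rw [← mul_sum, sum_pinned_mul_prodQ_mul hQ1 t hT'T disjoint_sdiff x fun x' =>
        (P (fun n k => mergeCols (T' \ T) hT'T x x' n (T'.orderEmbOfFin hT' k)) y / C) ^ s]
      ring

theorem statement1
    [Fintype 𝒳] [Fintype 𝒴] [Fintype Θ] [DecidableEq 𝒳]
    (D K N i : ℕ) (hK : 1 ≤ K) (hD : 2 * K ≤ D) (hN : 1 ≤ N) (hi1 : 1 ≤ i) (hiK : i ≤ K)
    (pri : Θ → ℝ) (hpri0 : ∀ t, 0 ≤ pri t) (hpri1 : ∑ t, pri t = 1)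
    (Q : Θ → 𝒳 → ℝ) (hQ0 : ∀ t x, 0 ≤ Q t x) (hQ1 : ∀ t, ∑ x, Q t x = 1)
    (P : (Fin N → Fin K → 𝒳) → (Fin N → 𝒴) → ℝ)
    (hP0 : ∀ x y, 0 ≤ P x y) (hP1 : ∀ x, ∑ y, P x y = 1)
    (hPsym : ∀ (e : Equiv.Perm (Fin K)) (x : Fin N → Fin K → 𝒳) (y : Fin N → 𝒴),
      P (fun n k => x n (e k)) y = P x y)
    (T T' : Finset (Fin D)) (hT : T.card = K) (hT' : T'.card = K)
    (hTT' : (T \ T').card = i) (hT'T : (T' \ T).card = i)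
    (t : Fin N → Θ) (x : Fin N → Fin D → 𝒳) (y : Fin N → 𝒴)
    (hpos : 0 < P (fun n k => x n (T.orderEmbOfFin hT k)) y)
    (s : ℝ) (hs : 0 < s) :
    (∑ z : Fin N → Fin D → 𝒳,
        (if (∀ n, ∀ j ∈ T, z n j = x n j) ∧
              P (fun n k => z n (T.orderEmbOfFin hT k)) y ≤
                P (fun n k => z n (T'.orderEmbOfFin hT' k)) y then (1:ℝ) else 0) *
          (prodPMF N pri t * (prodQ N D Q t z *
            P (fun n k => z n (T.orderEmbOfFin hT k)) y))) /
      (∑ z : Fin N → Fin D → 𝒳,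
        (if (∀ n, ∀ j ∈ T, z n j = x n j) then (1:ℝ) else 0) *
          (prodPMF N pri t * (prodQ N D Q t z *
            P (fun n k => z n (T.orderEmbOfFin hT k)) y))) ≤
    ∑ x' : Fin N → Fin i → 𝒳, prodQ N i Q t x' *
      (P (fun n k => mergeCols (T' \ T) hT'T x x' n (T'.orderEmbOfFin hT' k)) y /
        P (fun n k => x n (T.orderEmbOfFin hT k)) y) ^ s :=
  statement1_general D K N i pri hpri0 Q hQ0 hQ1 P hP0 T T' hT hT' hT'T t x y hpos s hs
end
end

section
/- In the discrete support-recovery model, fix i ∈ {1,…,K}, a K-element set T ⊂ {1,…,D}, and a partition T = T₁ ∪ T₂ with |T₁| = i. Let Ĩ_i = I(X^N_{T₁}; Y^N | X^N_{T₂}, θ^N) denote the conditional mutual information (base 2), computed under the joint law in which the salient set equals T, i.e. Y^N ∼ P(· | X_T^N). Then for every estimator ŝ = g(X^N, Y^N) (an arbitrary function of the data), the error probability under the model with uniformly random salient set S satisfies Pr[ŝ ≠ S] ≥ 1 − (Ĩ_i + 1)/log₂ C(D−K+i, i). -/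
open Finset

noncomputable section

variable {𝒳 𝒴 Θ : Type}

/-- The `K`-element subsets of `{1, …, D}`. -/
abbrev KSets (D K : ℕ) := {S : Finset (Fin D) // S.card = K}

/-- The `N × K` submatrix of columns indexed by the `K`-set `S`. -/
def cols {D K N : ℕ} (S : KSets D K) (x : Fin N → Fin D → 𝒳) : Fin N → Fin K → 𝒳 :=
  fun n k => x n (S.1.orderEmbOfFin S.2 k)

/-- Assemble the `N × K` matrix of columns of the true set `T` from the values `u` on the
partition block `T₁` (of size `i`) and the values `w` on `T₂ = T \ T₁` (of size `K - i`). -/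
def assembleT {𝒳 : Type} {D K N i : ℕ} (T T₁ : Finset (Fin D)) (hT : T.card = K)
    (hT1 : T₁.card = i) (hT2 : (T \ T₁).card = K - i)
    (u : Fin N → Fin i → 𝒳) (w : Fin N → Fin (K - i) → 𝒳) : Fin N → Fin K → 𝒳 :=
  fun n k =>
    if h : T.orderEmbOfFin hT k ∈ T₁ then
      u n ((T₁.orderIsoOfFin hT1).symm ⟨T.orderEmbOfFin hT k, h⟩)
    else
      w n (((T \ T₁).orderIsoOfFin hT2).symm
        ⟨T.orderEmbOfFin hT k, Finset.mem_sdiff.mpr ⟨T.orderEmbOfFin_mem hT k, h⟩⟩)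

variable [Fintype 𝒳] [Fintype 𝒴] [Fintype Θ]

/-- The joint pmf of `(X^N_{T₁}, Y^N, X^N_{T₂}, θ^N)` under the law in which the salient
set equals `T`. -/
def joint2 (D K N i : ℕ) (pri : Θ → ℝ) (Q : Θ → 𝒳 → ℝ)
    (P : (Fin N → Fin K → 𝒳) → (Fin N → 𝒴) → ℝ)
    (T T₁ : Finset (Fin D)) (hT : T.card = K) (hT1 : T₁.card = i)
    (hT2 : (T \ T₁).card = K - i)
    (u : Fin N → Fin i → 𝒳) (y : Fin N → 𝒴) (w : Fin N → Fin (K - i) → 𝒳)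
    (t : Fin N → Θ) : ℝ :=
  prodPMF N pri t * prodQ N i Q t u * prodQ N (K - i) Q t w *
    P (assembleT T T₁ hT hT1 hT2 u w) y

/-- The conditional mutual information `I(X^N_{T₁}; Y^N | X^N_{T₂}, θ^N)` (base 2),
under the joint law in which the salient set equals `T`. -/
def condMI2 (D K N i : ℕ) (pri : Θ → ℝ) (Q : Θ → 𝒳 → ℝ)
    (P : (Fin N → Fin K → 𝒳) → (Fin N → 𝒴) → ℝ)
    (T T₁ : Finset (Fin D)) (hT : T.card = K) (hT1 : T₁.card = i)
    (hT2 : (T \ T₁).card = K - i) : ℝ :=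
  ∑ u : Fin N → Fin i → 𝒳, ∑ y : Fin N → 𝒴, ∑ w : Fin N → Fin (K - i) → 𝒳,
    ∑ t : Fin N → Θ,
      joint2 D K N i pri Q P T T₁ hT hT1 hT2 u y w t * Real.logb 2
        ((joint2 D K N i pri Q P T T₁ hT hT1 hT2 u y w t *
            ∑ u' : Fin N → Fin i → 𝒳, ∑ y' : Fin N → 𝒴,
              joint2 D K N i pri Q P T T₁ hT hT1 hT2 u' y' w t) /
          ((∑ y' : Fin N → 𝒴, joint2 D K N i pri Q P T T₁ hT hT1 hT2 u y' w t) *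
            (∑ u' : Fin N → Fin i → 𝒳, joint2 D K N i pri Q P T T₁ hT hT1 hT2 u' y w t)))

/-!
Fix a `(K - i)`-set `W` and keep only the `C(D - K + i, i)` salient sets `S ⊇ W`. Compare each
data law `p_S(θ, x, y) = π(θ) Q(x | θ) P(y | x_S)` with one reference law `q_W`, in which `y` is
drawn given `θ` and `x_W` alone, the other `i` salient columns being resampled from `Q` exactly
as the columns of `T₁` are in `Ĩ_i`. Because `P` is invariant under permuting its inputs and the
columns of `x` are i.i.d., every divergence `D(p_S ‖ q_W)` equals `Ĩ_i`. Fano's inequality in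
divergence form (the log-sum inequality on the event `{ŝ = S}` together with `h₂ ≤ 1` bit) then
bounds the error averaged over `S ⊇ W`, and averaging over `W`, which counts every `K`-set
`C(K, K - i)` times, gives the bound for a uniform `S`.
-/

open Real

theorem sub_le_mul_log_div {a b c : ℝ} (ha : 0 ≤ a) (hb : 0 ≤ b) (hc : 0 < c)
    (hba : b = 0 → a = 0) : a * log c + (a - b * c) ≤ a * log (a / b) := by
  rcases ha.eq_or_lt with rfl | ha
  · simpa using mul_nonneg hb hc.le
  have hb : 0 < b := hb.lt_of_ne fun h => ha.ne' (hba h.symm)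
  have key := mul_le_mul_of_nonneg_left
    (one_sub_inv_le_log_of_pos (show 0 < a / (b * c) by positivity)) ha.le
  rw [inv_div, log_div ha.ne' (by positivity), log_mul hb.ne' hc.ne',
    show a * (1 - b * c / a) = a - b * c by field_simp] at key
  rw [log_div ha.ne' hb.ne']
  linarith

theorem sum_eq_zero_of_dominated {ι : Type*} {s : Finset ι} {a b : ι → ℝ}
    (hb : ∀ i ∈ s, 0 ≤ b i) (hba : ∀ i ∈ s, b i = 0 → a i = 0) (h : ∑ i ∈ s, b i = 0) :
    ∑ i ∈ s, a i = 0 :=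
  Finset.sum_eq_zero fun i hi => hba i hi ((Finset.sum_eq_zero_iff_of_nonneg hb).1 h i hi)

/-- The **log-sum inequality**. -/
theorem sum_mul_log_div_le {ι : Type*} (s : Finset ι) (a b : ι → ℝ)
    (ha : ∀ i ∈ s, 0 ≤ a i) (hb : ∀ i ∈ s, 0 ≤ b i) (hba : ∀ i ∈ s, b i = 0 → a i = 0) :
    (∑ i ∈ s, a i) * log ((∑ i ∈ s, a i) / ∑ i ∈ s, b i) ≤ ∑ i ∈ s, a i * log (a i / b i) := by
  set A := ∑ i ∈ s, a i
  set B := ∑ i ∈ s, b i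
  have hA : 0 ≤ A := Finset.sum_nonneg ha
  rcases hA.eq_or_lt with hA | hA
  · rw [← hA, zero_mul]
    refine Finset.sum_nonneg fun i hi => ?_
    rw [(Finset.sum_eq_zero_iff_of_nonneg ha).1 hA.symm i hi, zero_mul]
  have hB : 0 < B :=
    (Finset.sum_nonneg hb).lt_of_ne fun hB => hA.ne' (sum_eq_zero_of_dominated hb hba hB.symm)
  calc A * log (A / B) = ∑ i ∈ s, (a i * log (A / B) + (a i - b i * (A / B))) := by
        rw [Finset.sum_add_distrib, Finset.sum_sub_distrib, ← Finset.sum_mul, ← Finset.sum_mul]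
        field_simp
        ring
    _ ≤ ∑ i ∈ s, a i * log (a i / b i) := Finset.sum_le_sum fun i hi =>
        sub_le_mul_log_div (ha i hi) (hb i hi) (div_pos hA hB) (hba i hi)

theorem sum_mul_logb_div_le {ι : Type*} (s : Finset ι) (a b : ι → ℝ)
    (ha : ∀ i ∈ s, 0 ≤ a i) (hb : ∀ i ∈ s, 0 ≤ b i) (hba : ∀ i ∈ s, b i = 0 → a i = 0) :
    (∑ i ∈ s, a i) * logb 2 ((∑ i ∈ s, a i) / ∑ i ∈ s, b i) ≤
      ∑ i ∈ s, a i * logb 2 (a i / b i) := by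
  simp_rw [logb, ← mul_div_assoc, ← Finset.sum_div]
  exact div_le_div_of_nonneg_right (sum_mul_log_div_le s a b ha hb hba) (log_pos one_lt_two).le

theorem sum_filter_mul_logb_add_sum_filter_not_le {ι : Type*} (s : Finset ι) (p : ι → Prop)
    [DecidablePred p] (a b : ι → ℝ) (ha : ∀ i ∈ s, 0 ≤ a i) (hb : ∀ i ∈ s, 0 ≤ b i)
    (hba : ∀ i ∈ s, b i = 0 → a i = 0) :
    (∑ i ∈ s.filter p, a i) * logb 2 ((∑ i ∈ s.filter p, a i) / ∑ i ∈ s.filter p, b i) +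
        (∑ i ∈ s.filter (¬ p ·), a i) *
          logb 2 ((∑ i ∈ s.filter (¬ p ·), a i) / ∑ i ∈ s.filter (¬ p ·), b i) ≤
      ∑ i ∈ s, a i * logb 2 (a i / b i) := by
  rw [← Finset.sum_filter_add_sum_filter_not s p]
  exact add_le_add
    (sum_mul_logb_div_le _ a b (fun i hi => ha i (Finset.mem_filter.1 hi).1)
      (fun i hi => hb i (Finset.mem_filter.1 hi).1) fun i hi => hba i (Finset.mem_filter.1 hi).1)
    (sum_mul_logb_div_le _ a b (fun i hi => ha i (Finset.mem_filter.1 hi).1)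
      (fun i hi => hb i (Finset.mem_filter.1 hi).1) fun i hi => hba i (Finset.mem_filter.1 hi).1)

theorem mul_logb_div_le_mul_logb_div {a b c : ℝ} (ha : 0 ≤ a) (hb : 0 ≤ b) (hbc : b ≤ c)
    (hba : b = 0 → a = 0) : a * logb 2 (a / c) ≤ a * logb 2 (a / b) := by
  rcases ha.eq_or_lt with rfl | ha
  · simp
  have hb : 0 < b := hb.lt_of_ne (fun h => ha.ne' (hba h.symm))
  exact mul_le_mul_of_nonneg_left (logb_le_logb_of_le one_lt_two (div_pos ha (hb.trans_le hbc))
    (div_le_div_of_nonneg_left ha.le hb hbc)) ha.le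

/-- The binary entropy is at most one bit, in unnormalised form. -/
theorem neg_le_mul_logb_add_mul_logb {a a' : ℝ} (hM : 0 < a + a') :
    -(a + a') ≤ a * logb 2 (a / (a + a')) + a' * logb 2 (a' / (a + a')) := by
  have hsub : 1 - a / (a + a') = a' / (a + a') := by field_simp; ring
  have hent : (a + a') * binEntropy (a / (a + a')) =
      -(a * log (a / (a + a')) + a' * log (a' / (a + a'))) := by
    rw [binEntropy, hsub, log_inv, log_inv]
    field_simp
    ring
  have hlog2 : 0 < log 2 := log_pos one_lt_two
  have := mul_le_mul_of_nonneg_left (binEntropy_le_log_two (p := a / (a + a'))) hM.le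
  simp only [logb, ← mul_div_assoc, ← add_div, le_div_iff₀ hlog2]
  linarith

theorem le_binary_divergence {A A' B B' : ℝ} (hA : 0 ≤ A) (hA' : 0 ≤ A') (hM : 0 < A + A')
    (hB : 0 ≤ B) (hB' : 0 ≤ B') (hB1 : B ≤ 1) (hB'M : B' ≤ A + A')
    (hBA : B = 0 → A = 0) (hB'A' : B' = 0 → A' = 0) :
    A * logb 2 (A + A') - (A + A') ≤ A * logb 2 (A / B) + A' * logb 2 (A' / B') := by
  have h1 := mul_logb_div_le_mul_logb_div hA hB hB1 hBA
  have h2 := mul_logb_div_le_mul_logb_div hA' hB' hB'M hB'A'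
  have h3 := neg_le_mul_logb_add_mul_logb hM
  have h4 : A * logb 2 (A / (A + A')) = A * logb 2 (A / 1) - A * logb 2 (A + A') := by
    rcases hA.eq_or_lt with rfl | hA
    · simp
    rw [div_one, logb_div hA.ne' hM.ne']
    ring
  linarith

theorem sum_filter_eq_le_sum {F Z E : Type*} [Fintype Z] [DecidableEq E] (H : Finset F)
    (q : Z → ℝ) (hq : ∀ z, 0 ≤ q z) {ι : F → E} (hι : Function.Injective ι) (est : Z → E) :
    ∑ sz ∈ (H ×ˢ Finset.univ).filter (fun sz => est sz.2 = ι sz.1), q sz.2 ≤ ∑ z, q z := by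
  rw [Finset.sum_filter, Finset.sum_product, Finset.sum_comm]
  refine Finset.sum_le_sum fun z _ => ?_
  rw [← Finset.sum_filter]
  simp only [Finset.sum_const, nsmul_eq_mul]
  have : #(H.filter fun s => est z = ι s) ≤ 1 :=
    Finset.card_le_one.2 fun s hs s' hs' => hι ((Finset.mem_filter.1 hs).2.symm.trans
      (Finset.mem_filter.1 hs').2)
  exact mul_le_of_le_one_left (hq z) (by exact_mod_cast this)

theorem fano_inequality {F Z E : Type*} [Fintype Z] [DecidableEq E] (H : Finset F)
    (p : F → Z → ℝ) (q : Z → ℝ) (I : ℝ)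
    (hp0 : ∀ s z, 0 ≤ p s z) (hp1 : ∀ s ∈ H, ∑ z, p s z = 1)
    (hq0 : ∀ z, 0 ≤ q z) (hq1 : ∑ z, q z ≤ 1)
    (hdom : ∀ s ∈ H, ∀ z, q z = 0 → p s z = 0)
    (hKL : ∀ s ∈ H, ∑ z, p s z * logb 2 (p s z / q z) ≤ I)
    {ι : F → E} (hι : Function.Injective ι) (est : Z → E) (hH : 2 ≤ #H) :
    (1 - (I + 1) / logb 2 #H) * #H ≤ ∑ s ∈ H, ∑ z, p s z * if est z ≠ ι s then 1 else 0 := by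
  set M : ℝ := (#H : ℝ)
  have hM : 2 ≤ M := Nat.ofNat_le_cast.2 hH
  have hL : 0 < logb 2 M := logb_pos one_lt_two (by linarith)
  set G := (H ×ˢ Finset.univ).filter fun sz : F × Z => est sz.2 = ι sz.1
  set Gc := (H ×ˢ Finset.univ).filter fun sz : F × Z => ¬ est sz.2 = ι sz.1
  have hsplit (f : F × Z → ℝ) : ∑ sz ∈ G, f sz + ∑ sz ∈ Gc, f sz = ∑ s ∈ H, ∑ z, f (s, z) := by
    rw [Finset.sum_filter_add_sum_filter_not, Finset.sum_product]
  have hdomG : ∀ sz ∈ H ×ˢ Finset.univ, q sz.2 = 0 → p sz.1 sz.2 = 0 := fun sz hsz =>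
    hdom sz.1 (Finset.mem_product.1 hsz).1 sz.2
  set A := ∑ sz ∈ G, p sz.1 sz.2
  set A' := ∑ sz ∈ Gc, p sz.1 sz.2
  set B := ∑ sz ∈ G, q sz.2
  set B' := ∑ sz ∈ Gc, q sz.2
  have hAA' : A + A' = M := by
    rw [hsplit, Finset.sum_congr rfl hp1]
    simp [M]
  have hBB' : B + B' ≤ M := by
    rw [hsplit]
    simpa [M] using Finset.sum_le_sum fun (s : F) (_ : s ∈ H) => hq1
  have herr : ∑ s ∈ H, ∑ z, p s z * (if est z ≠ ι s then 1 else 0) = A' := by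
    simp only [A', Gc, Finset.sum_filter, Finset.sum_product, mul_ite, mul_one, mul_zero, ne_eq]
  have hlogsum : A * logb 2 (A / B) + A' * logb 2 (A' / B') ≤ M * I :=
    calc _ ≤ ∑ sz ∈ H ×ˢ Finset.univ, p sz.1 sz.2 * logb 2 (p sz.1 sz.2 / q sz.2) :=
          sum_filter_mul_logb_add_sum_filter_not_le _ _ _ _ (fun _ _ => hp0 _ _)
            (fun _ _ => hq0 _) hdomG
      _ ≤ ∑ s ∈ H, I := by rw [Finset.sum_product]; exact Finset.sum_le_sum hKL
      _ = M * I := by simp [M]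
  have hbin := le_binary_divergence (A := A) (A' := A') (B := B) (B' := B')
    (Finset.sum_nonneg fun _ _ => hp0 _ _) (Finset.sum_nonneg fun _ _ => hp0 _ _)
    (by linarith) (Finset.sum_nonneg fun _ _ => hq0 _) (Finset.sum_nonneg fun _ _ => hq0 _)
    ((sum_filter_eq_le_sum H q hq0 hι est).trans hq1)
    (by linarith [Finset.sum_nonneg fun sz (_ : sz ∈ G) => hq0 sz.2])
    (sum_eq_zero_of_dominated (fun _ _ => hq0 _) fun sz hsz => hdomG sz (Finset.mem_filter.1 hsz).1)
    (sum_eq_zero_of_dominated (fun _ _ => hq0 _) fun sz hsz => hdomG sz (Finset.mem_filter.1 hsz).1)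
  rw [hAA'] at hbin
  rw [herr]
  have : A ≤ (I + 1) / logb 2 M * M := by
    rw [div_mul_eq_mul_div, le_div_iff₀ hL]
    linarith
  linarith

theorem mul_logb_mul_div_mul {b x c p r : ℝ} (h : x ≠ 0 → c ≠ 0) :
    x * logb b (c * p / (c * r)) = x * logb b (p / r) := by
  by_cases hx : x = 0
  · simp [hx]
  · rw [mul_div_mul_left _ _ (h hx)]

theorem card_filter_subtype_card_eq {α : Type*} [Fintype α] [DecidableEq α] (k : ℕ)
    (p : Finset α → Prop) [DecidablePred p] :
    #(Finset.univ.filter fun s : {s : Finset α // s.card = k} => p s.1) =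
      #((Finset.univ.powersetCard k).filter p) := by
  rw [← Finset.card_map (Function.Embedding.subtype _)]
  congr 1
  ext s
  simp [and_comm]

theorem card_supersets {D K : ℕ} (W : Finset (Fin D)) (hWK : #W ≤ K) :
    #(Finset.univ.filter fun S : KSets D K => W ⊆ S.1) = (D - #W).choose (K - #W) := by
  rw [card_filter_subtype_card_eq, Finset.card_filter_powersetCard_subset W _ K
    (Finset.subset_univ W) hWK, Finset.card_univ, Fintype.card_fin]

theorem sum_sum_supersets {D K j : ℕ} (f : KSets D K → ℝ) :
    ∑ W : KSets D j, ∑ S ∈ Finset.univ.filter (fun S : KSets D K => W.1 ⊆ S.1), f S =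
      K.choose j * ∑ S, f S := by
  simp_rw [Finset.sum_filter]
  rw [Finset.sum_comm, Finset.mul_sum]
  refine Finset.sum_congr rfl fun S _ => ?_
  rw [← Finset.sum_filter, Finset.sum_const, nsmul_eq_mul,
    card_filter_subtype_card_eq j (· ⊆ S.1)]
  have : (Finset.univ.powersetCard j).filter (· ⊆ S.1) = S.1.powersetCard j := by
    ext W
    simp [Finset.mem_powersetCard, and_comm]
  rw [this, Finset.card_powersetCard, S.2]

theorem two_le_choose {n k : ℕ} (hk : 1 ≤ k) (hkn : k < n) : 2 ≤ n.choose k := by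
  obtain ⟨m, rfl⟩ : ∃ m, n = m + 1 := ⟨n - 1, by omega⟩
  obtain ⟨l, rfl⟩ : ∃ l, k = l + 1 := ⟨k - 1, by omega⟩
  have := Nat.choose_pos (show l ≤ m by omega)
  have := Nat.choose_pos (show l + 1 ≤ m by omega)
  rw [Nat.choose_succ_succ']
  omega

theorem exists_sumEquiv {α : Type*} [Fintype α] {a b : ℕ} {f : Fin a → α} {g : Fin b → α}
    (hf : Function.Injective f) (hg : Function.Injective g) (hfg : ∀ k l, f k ≠ g l) :
    ∃ (c : ℕ) (e : Fin a ⊕ Fin b ⊕ Fin c ≃ α),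
      (∀ k, e (.inl k) = f k) ∧ ∀ k, e (.inr (.inl k)) = g k := by
  classical
  let rest := (Fintype.equivFin {d : α // d ∉ Set.range f ∧ d ∉ Set.range g}).symm
  refine ⟨_, Equiv.ofBijective (Sum.elim f (Sum.elim g fun k => (rest k).1)) ⟨?_, fun d => ?_⟩,
    fun _ => rfl, fun _ => rfl⟩
  · refine hf.sumElim (hg.sumElim (Subtype.val_injective.comp rest.injective)
      fun k l h => (rest l).2.2 ⟨k, h⟩) fun k l => ?_
    rcases l with l | l
    · exact hfg k l
    · exact fun h => (rest l).2.1 ⟨k, h⟩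
  by_cases hd : d ∈ Set.range f
  · obtain ⟨k, rfl⟩ := hd
    exact ⟨.inl k, rfl⟩
  by_cases hd' : d ∈ Set.range g
  · obtain ⟨k, rfl⟩ := hd'
    exact ⟨.inr (.inl k), rfl⟩
  exact ⟨.inr (.inr (rest.symm ⟨d, hd, hd'⟩)), by simp⟩

theorem orderEmbOfFin_orderIsoOfFin_symm {α : Type*} [LinearOrder α] (s : Finset α) {m : ℕ}
    (h : s.card = m) (d : s) : s.orderEmbOfFin h ((s.orderIsoOfFin h).symm d) = d :=
  congrArg Subtype.val ((s.orderIsoOfFin h).apply_symm_apply d)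

theorem orderEmbOfFin_ne_of_disjoint {α : Type*} [LinearOrder α] {A B : Finset α}
    (h : Disjoint A B) {a b : ℕ} (hA : A.card = a) (hB : B.card = b) (k : Fin a) (l : Fin b) :
    A.orderEmbOfFin hA k ≠ B.orderEmbOfFin hB l := fun e =>
  Finset.disjoint_left.1 h (A.orderEmbOfFin_mem hA k) (e ▸ B.orderEmbOfFin_mem hB l)

section

-- Fresh alphabets, so that the `Fintype` instances declared above enter only where used.
variable {𝒳 𝒴 Θ : Type}

theorem sum_prodPMF [Fintype Θ] (N : ℕ) (pri : Θ → ℝ) (h1 : ∑ θ, pri θ = 1) :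
    ∑ t : Fin N → Θ, prodPMF N pri t = 1 := by
  simp [prodPMF, ← Fintype.prod_sum, h1]

theorem sum_prodQ [Fintype 𝒳] (N m : ℕ) (Q : Θ → 𝒳 → ℝ) (hQ1 : ∀ θ, ∑ x, Q θ x = 1)
    (t : Fin N → Θ) : ∑ x : Fin N → Fin m → 𝒳, prodQ N m Q t x = 1 := by
  have hrow : ∀ θ, ∑ v : Fin m → 𝒳, ∏ k, Q θ (v k) = 1 := fun θ => by
    rw [← Fintype.prod_sum fun _ => Q θ]
    simp [hQ1]
  unfold prodQ
  rw [← Fintype.prod_sum fun n (v : Fin m → 𝒳) => ∏ k, Q (t n) (v k)]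
  simp [hrow]

def blockEquiv {N D a b c : ℕ} (e : Fin a ⊕ Fin b ⊕ Fin c ≃ Fin D) :
    (Fin N → Fin a → 𝒳) × (Fin N → Fin b → 𝒳) × (Fin N → Fin c → 𝒳) ≃ (Fin N → Fin D → 𝒳) where
  toFun v n d := Sum.elim (v.1 n) (Sum.elim (v.2.1 n) (v.2.2 n)) (e.symm d)
  invFun x := (fun n k => x n (e (.inl k)), fun n k => x n (e (.inr (.inl k))),
    fun n k => x n (e (.inr (.inr k))))
  left_inv v := by simp
  right_inv x := by
    funext n d
    obtain ⟨s, rfl⟩ := e.surjective d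
    rcases s with k | k | k <;> simp

theorem prodQ_blockEquiv {N D a b c : ℕ} (Q : Θ → 𝒳 → ℝ) (t : Fin N → Θ)
    (e : Fin a ⊕ Fin b ⊕ Fin c ≃ Fin D) (v) :
    prodQ N D Q t (blockEquiv e v) =
      prodQ N a Q t v.1 * prodQ N b Q t v.2.1 * prodQ N c Q t v.2.2 := by
  simp only [prodQ, ← Finset.prod_mul_distrib]
  refine Finset.prod_congr rfl fun n _ => ?_
  rw [← e.prod_comp]
  simp [blockEquiv, Fintype.prod_sum_type, mul_assoc]

theorem sum_prodQ_mul_comp [Fintype 𝒳] {N D a b : ℕ} (Q : Θ → 𝒳 → ℝ)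
    (hQ1 : ∀ θ, ∑ x, Q θ x = 1) (t : Fin N → Θ) {f : Fin a → Fin D} {g : Fin b → Fin D}
    (hf : Function.Injective f) (hg : Function.Injective g) (hfg : ∀ k l, f k ≠ g l)
    (F : (Fin N → Fin a → 𝒳) → (Fin N → Fin b → 𝒳) → ℝ) :
    ∑ x, prodQ N D Q t x * F (fun n k => x n (f k)) (fun n k => x n (g k)) =
      ∑ u, ∑ w, prodQ N a Q t u * prodQ N b Q t w * F u w := by
  obtain ⟨c, e, hef, heg⟩ := exists_sumEquiv hf hg hfg
  simp_rw [← hef, ← heg]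
  rw [← (blockEquiv e).sum_comp, Fintype.sum_prod_type]
  refine Finset.sum_congr rfl fun u _ => ?_
  rw [Fintype.sum_prod_type]
  refine Finset.sum_congr rfl fun w _ => ?_
  simp_rw [prodQ_blockEquiv]
  simp only [blockEquiv, Equiv.coe_fn_mk, Equiv.symm_apply_apply, Sum.elim_inl, Sum.elim_inr]
  simp_rw [mul_comm _ (prodQ N c Q t _), mul_assoc, ← Finset.sum_mul, sum_prodQ N c Q hQ1 t,
    one_mul]

theorem P_comp_eq_cols {D K N : ℕ} (P : (Fin N → Fin K → 𝒳) → (Fin N → 𝒴) → ℝ)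
    (hPsym : ∀ (e : Equiv.Perm (Fin K)) (x : Fin N → Fin K → 𝒳) (y : Fin N → 𝒴),
      P (fun n k => x n (e k)) y = P x y)
    (S : KSets D K) {τ : Fin K → Fin D} (hτ : Function.Injective τ) (hτS : ∀ k, τ k ∈ S.1)
    (x : Fin N → Fin D → 𝒳) (y : Fin N → 𝒴) :
    P (fun n k => x n (τ k)) y = P (cols S x) y := by
  let σ : Equiv.Perm (Fin K) := Equiv.ofBijective
    (fun k => (S.1.orderIsoOfFin S.2).symm ⟨τ k, hτS k⟩)
    (Finite.injective_iff_bijective.1 fun k l hkl =>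
      hτ (congrArg Subtype.val ((S.1.orderIsoOfFin S.2).symm.injective hkl)))
  rw [← hPsym σ (cols S x)]
  congr 1
  funext n k
  exact congrArg (x n) (orderEmbOfFin_orderIsoOfFin_symm S.1 S.2 ⟨τ k, hτS k⟩).symm

def splitT {D K i : ℕ} (T T₁ : Finset (Fin D)) (hT : T.card = K) (hT1 : T₁.card = i)
    (hT2 : (T \ T₁).card = K - i) (k : Fin K) : Fin i ⊕ Fin (K - i) :=
  if h : T.orderEmbOfFin hT k ∈ T₁ then .inl ((T₁.orderIsoOfFin hT1).symm ⟨_, h⟩)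
  else .inr (((T \ T₁).orderIsoOfFin hT2).symm
    ⟨_, Finset.mem_sdiff.2 ⟨T.orderEmbOfFin_mem hT k, h⟩⟩)

theorem assembleT_eq_sumElim_splitT {D K N i : ℕ} (T T₁ : Finset (Fin D)) (hT : T.card = K)
    (hT1 : T₁.card = i) (hT2 : (T \ T₁).card = K - i)
    (u : Fin N → Fin i → 𝒳) (w : Fin N → Fin (K - i) → 𝒳) :
    assembleT T T₁ hT hT1 hT2 u w =
      fun n k => Sum.elim (u n) (w n) (splitT T T₁ hT hT1 hT2 k) := by
  funext n k
  unfold assembleT splitT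
  split_ifs <;> rfl

theorem splitT_injective {D K i : ℕ} (T T₁ : Finset (Fin D)) (hT : T.card = K)
    (hT1 : T₁.card = i) (hT2 : (T \ T₁).card = K - i) :
    Function.Injective (splitT T T₁ hT hT1 hT2) := by
  refine Function.Injective.of_comp (f := Sum.elim (T₁.orderEmbOfFin hT1)
    ((T \ T₁).orderEmbOfFin hT2)) ?_
  convert (T.orderEmbOfFin hT).injective using 1
  funext k
  simp only [Function.comp_apply, splitT]
  split_ifs <;> exact orderEmbOfFin_orderIsoOfFin_symm _ _ _

theorem P_assembleT_comp {D K N i : ℕ} (P : (Fin N → Fin K → 𝒳) → (Fin N → 𝒴) → ℝ)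
    (hPsym : ∀ (e : Equiv.Perm (Fin K)) (x : Fin N → Fin K → 𝒳) (y : Fin N → 𝒴),
      P (fun n k => x n (e k)) y = P x y)
    (T T₁ : Finset (Fin D)) (hT : T.card = K) (hT1 : T₁.card = i) (hT2 : (T \ T₁).card = K - i)
    (S : KSets D K) {f : Fin i → Fin D} {g : Fin (K - i) → Fin D}
    (hf : Function.Injective f) (hg : Function.Injective g) (hfg : ∀ k l, f k ≠ g l)
    (hfS : ∀ k, f k ∈ S.1) (hgS : ∀ k, g k ∈ S.1) (x : Fin N → Fin D → 𝒳) (y : Fin N → 𝒴) :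
    P (assembleT T T₁ hT hT1 hT2 (fun n k => x n (f k)) (fun n k => x n (g k))) y =
      P (cols S x) y := by
  have hS : ∀ k, Sum.elim f g (splitT T T₁ hT hT1 hT2 k) ∈ S.1 := fun k => by
    rcases splitT T T₁ hT hT1 hT2 k with l | l
    exacts [hfS l, hgS l]
  convert P_comp_eq_cols P hPsym S ((hf.sumElim hg hfg).comp (splitT_injective ..)) hS x y
    using 2
  rw [assembleT_eq_sumElim_splitT]
  funext n k
  show _ = x n (Sum.elim f g (splitT T T₁ hT hT1 hT2 k))
  cases splitT T T₁ hT hT1 hT2 k <;> rfl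

theorem P_cols_eq_assembleT {D K N i : ℕ} (P : (Fin N → Fin K → 𝒳) → (Fin N → 𝒴) → ℝ)
    (hPsym : ∀ (e : Equiv.Perm (Fin K)) (x : Fin N → Fin K → 𝒳) (y : Fin N → 𝒴),
      P (fun n k => x n (e k)) y = P x y)
    (T T₁ : Finset (Fin D)) (hT : T.card = K) (hT1 : T₁.card = i) (hT2 : (T \ T₁).card = K - i)
    {S : KSets D K} {W : KSets D (K - i)} (hWS : W.1 ⊆ S.1) (hA : (S.1 \ W.1).card = i)
    (x : Fin N → Fin D → 𝒳) (y : Fin N → 𝒴) :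
    P (cols S x) y = P (assembleT T T₁ hT hT1 hT2 (cols ⟨_, hA⟩ x) (cols W x)) y :=
  (P_assembleT_comp P hPsym T T₁ hT hT1 hT2 S (Finset.orderEmbOfFin _ hA).injective
    (W.1.orderEmbOfFin W.2).injective (orderEmbOfFin_ne_of_disjoint Finset.sdiff_disjoint _ _)
    (fun _ => Finset.sdiff_subset (Finset.orderEmbOfFin_mem _ _ _))
    (fun _ => hWS (Finset.orderEmbOfFin_mem _ _ _)) x y).symm

theorem prodQ_nonneg {N m : ℕ} {Q : Θ → 𝒳 → ℝ} (hQ0 : ∀ θ x, 0 ≤ Q θ x) (t : Fin N → Θ)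
    (x : Fin N → Fin m → 𝒳) : 0 ≤ prodQ N m Q t x :=
  Finset.prod_nonneg fun _ _ => Finset.prod_nonneg fun _ _ => hQ0 _ _

theorem prodQ_comp_pos {N D m : ℕ} {Q : Θ → 𝒳 → ℝ} (hQ0 : ∀ θ x, 0 ≤ Q θ x) {t : Fin N → Θ}
    {x : Fin N → Fin D → 𝒳} (hx : prodQ N D Q t x ≠ 0) (f : Fin m → Fin D) :
    0 < prodQ N m Q t (fun n k => x n (f k)) :=
  Finset.prod_pos fun n _ => Finset.prod_pos fun k _ => (hQ0 _ _).lt_of_ne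
    (Finset.prod_ne_zero_iff.1 (Finset.prod_ne_zero_iff.1 hx n (Finset.mem_univ n)) (f k)
      (Finset.mem_univ _)).symm

/-- The joint pmf of `(θ^N, X^N, Y^N)` when `Y^N` is drawn from the kernel `κ`. -/
def jointPMF {N D : ℕ} (pri : Θ → ℝ) (Q : Θ → 𝒳 → ℝ)
    (κ : (Fin N → Θ) → (Fin N → Fin D → 𝒳) → (Fin N → 𝒴) → ℝ)
    (z : (Fin N → Θ) × (Fin N → Fin D → 𝒳) × (Fin N → 𝒴)) : ℝ :=
  prodPMF N pri z.1 * prodQ N D Q z.1 z.2.1 * κ z.1 z.2.1 z.2.2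

section jointPMF

variable [Fintype 𝒳] [Fintype 𝒴] [Fintype Θ] {N D : ℕ} {pri : Θ → ℝ} {Q : Θ → 𝒳 → ℝ}
  {κ : (Fin N → Θ) → (Fin N → Fin D → 𝒳) → (Fin N → 𝒴) → ℝ}

theorem sum_jointPMF_mul (F : (Fin N → Θ) × (Fin N → Fin D → 𝒳) × (Fin N → 𝒴) → ℝ) :
    ∑ z, jointPMF pri Q κ z * F z =
      ∑ t, prodPMF N pri t * ∑ x, prodQ N D Q t x * ∑ y, κ t x y * F (t, x, y) := by
  simp only [jointPMF, Fintype.sum_prod_type, Finset.mul_sum, mul_assoc]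

theorem sum_jointPMF (hpri1 : ∑ θ, pri θ = 1) (hQ1 : ∀ θ, ∑ x, Q θ x = 1)
    (hκ1 : ∀ t x, ∑ y, κ t x y = 1) : ∑ z, jointPMF pri Q κ z = 1 := by
  simpa [hκ1, sum_prodQ N D Q hQ1, sum_prodPMF N pri hpri1] using
    sum_jointPMF_mul (pri := pri) (Q := Q) (κ := κ) 1

theorem sum_jointPMF_mul_logb_div_jointPMF
    (κ' : (Fin N → Θ) → (Fin N → Fin D → 𝒳) → (Fin N → 𝒴) → ℝ) :
    ∑ z, jointPMF pri Q κ z * logb 2 (jointPMF pri Q κ z / jointPMF pri Q κ' z) =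
      ∑ t, prodPMF N pri t * ∑ x, prodQ N D Q t x *
        ∑ y, κ t x y * logb 2 (κ t x y / κ' t x y) := by
  rw [← sum_jointPMF_mul fun z => logb 2 (κ z.1 z.2.1 z.2.2 / κ' z.1 z.2.1 z.2.2)]
  exact Finset.sum_congr rfl fun z _ => mul_logb_mul_div_mul left_ne_zero_of_mul

end jointPMF

theorem jointPMF_nonneg {N D : ℕ} {pri : Θ → ℝ} {Q : Θ → 𝒳 → ℝ}
    {κ : (Fin N → Θ) → (Fin N → Fin D → 𝒳) → (Fin N → 𝒴) → ℝ} (hpri0 : ∀ θ, 0 ≤ pri θ)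
    (hQ0 : ∀ θ x, 0 ≤ Q θ x) (hκ0 : ∀ t x y, 0 ≤ κ t x y) (z) : 0 ≤ jointPMF pri Q κ z :=
  mul_nonneg (mul_nonneg (Finset.prod_nonneg fun _ _ => hpri0 _) (prodQ_nonneg hQ0 _ _))
    (hκ0 _ _ _)

/-- The conditional pmf of `Y^N` given `θ^N = t` and `X^N_{T₂} = w`, when the salient set
is `T`. -/
def condY [Fintype 𝒳] {D K N i : ℕ} (Q : Θ → 𝒳 → ℝ)
    (P : (Fin N → Fin K → 𝒳) → (Fin N → 𝒴) → ℝ) (T T₁ : Finset (Fin D)) (hT : T.card = K)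
    (hT1 : T₁.card = i) (hT2 : (T \ T₁).card = K - i) (t : Fin N → Θ)
    (w : Fin N → Fin (K - i) → 𝒳) (y : Fin N → 𝒴) : ℝ :=
  ∑ u, prodQ N i Q t u * P (assembleT T T₁ hT hT1 hT2 u w) y

section condY

variable {D K N i : ℕ} {pri : Θ → ℝ} {Q : Θ → 𝒳 → ℝ}
  {P : (Fin N → Fin K → 𝒳) → (Fin N → 𝒴) → ℝ} {T T₁ : Finset (Fin D)} {hT : T.card = K}
  {hT1 : T₁.card = i} {hT2 : (T \ T₁).card = K - i}

theorem condY_nonneg [Fintype 𝒳] (hQ0 : ∀ θ x, 0 ≤ Q θ x) (hP0 : ∀ x y, 0 ≤ P x y) (t w y) :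
    0 ≤ condY Q P T T₁ hT hT1 hT2 t w y :=
  Finset.sum_nonneg fun _ _ => mul_nonneg (prodQ_nonneg hQ0 _ _) (hP0 _ _)

theorem sum_condY [Fintype 𝒳] [Fintype 𝒴] (hQ1 : ∀ θ, ∑ x, Q θ x = 1)
    (hP1 : ∀ x, ∑ y, P x y = 1) (t w) :
    ∑ y, condY Q P T T₁ hT hT1 hT2 t w y = 1 := by
  simp only [condY]
  rw [Finset.sum_comm]
  simp [← Finset.mul_sum, hP1, sum_prodQ N i Q hQ1 t]

theorem sum_joint2_y [Fintype 𝒴] (hP1 : ∀ x, ∑ y, P x y = 1) (u w t) :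
    ∑ y, joint2 D K N i pri Q P T T₁ hT hT1 hT2 u y w t =
      prodPMF N pri t * prodQ N i Q t u * prodQ N (K - i) Q t w := by
  simp [joint2, ← Finset.mul_sum, hP1]

theorem sum_joint2_u [Fintype 𝒳] (y w t) :
    ∑ u, joint2 D K N i pri Q P T T₁ hT hT1 hT2 u y w t =
      prodPMF N pri t * prodQ N (K - i) Q t w * condY Q P T T₁ hT hT1 hT2 t w y := by
  simp only [joint2, condY, Finset.mul_sum]
  exact Finset.sum_congr rfl fun _ _ => by ring

theorem sum_joint2_uy [Fintype 𝒳] [Fintype 𝒴] (hQ1 : ∀ θ, ∑ x, Q θ x = 1)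
    (hP1 : ∀ x, ∑ y, P x y = 1) (w t) :
    ∑ u, ∑ y, joint2 D K N i pri Q P T T₁ hT hT1 hT2 u y w t =
      prodPMF N pri t * prodQ N (K - i) Q t w := by
  simp [sum_joint2_y hP1, mul_comm _ (prodQ N (K - i) Q t w), ← Finset.mul_sum,
    sum_prodQ N i Q hQ1 t]

theorem joint2_mul_logb_eq [Fintype 𝒳] [Fintype 𝒴] (hQ1 : ∀ θ, ∑ x, Q θ x = 1)
    (hP1 : ∀ x, ∑ y, P x y = 1) (u y w t) :
    joint2 D K N i pri Q P T T₁ hT hT1 hT2 u y w t * logb 2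
        ((joint2 D K N i pri Q P T T₁ hT hT1 hT2 u y w t *
            ∑ u', ∑ y', joint2 D K N i pri Q P T T₁ hT hT1 hT2 u' y' w t) /
          ((∑ y', joint2 D K N i pri Q P T T₁ hT hT1 hT2 u y' w t) *
            ∑ u', joint2 D K N i pri Q P T T₁ hT hT1 hT2 u' y w t)) =
      prodPMF N pri t * (prodQ N i Q t u * prodQ N (K - i) Q t w *
        (P (assembleT T T₁ hT hT1 hT2 u w) y *
          logb 2 (P (assembleT T T₁ hT hT1 hT2 u w) y / condY Q P T T₁ hT hT1 hT2 t w y))) := by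
  rw [sum_joint2_uy hQ1 hP1, sum_joint2_y hP1, sum_joint2_u]
  set pt := prodPMF N pri t
  set Qu := prodQ N i Q t u
  set Qw := prodQ N (K - i) Q t w
  set p := P (assembleT T T₁ hT hT1 hT2 u w) y
  have hJ : joint2 D K N i pri Q P T T₁ hT hT1 hT2 u y w t = pt * Qu * Qw * p := rfl
  have hc : pt * Qu * Qw * p ≠ 0 → pt * Qu * Qw * (pt * Qw) ≠ 0 := by
    simp only [ne_eq, mul_eq_zero, not_or]
    tauto
  rw [hJ, show pt * Qu * Qw * p * (pt * Qw) = pt * Qu * Qw * (pt * Qw) * p by ring,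
    show pt * Qu * Qw * (pt * Qw * condY Q P T T₁ hT hT1 hT2 t w y) =
      pt * Qu * Qw * (pt * Qw) * condY Q P T T₁ hT hT1 hT2 t w y by ring,
    mul_logb_mul_div_mul hc]
  ring

theorem condMI2_eq [Fintype 𝒳] [Fintype 𝒴] [Fintype Θ] (hQ1 : ∀ θ, ∑ x, Q θ x = 1)
    (hP1 : ∀ x, ∑ y, P x y = 1) :
    condMI2 D K N i pri Q P T T₁ hT hT1 hT2 =
      ∑ t, prodPMF N pri t * ∑ u, ∑ w, prodQ N i Q t u * prodQ N (K - i) Q t w *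
        ∑ y, P (assembleT T T₁ hT hT1 hT2 u w) y *
          logb 2 (P (assembleT T T₁ hT hT1 hT2 u w) y / condY Q P T T₁ hT hT1 hT2 t w y) := by
  unfold condMI2
  refine (Finset.sum_congr rfl fun u _ => Finset.sum_congr rfl fun y _ => Finset.sum_congr rfl
    fun w _ => Finset.sum_congr rfl fun t _ => joint2_mul_logb_eq hQ1 hP1 u y w t).trans ?_
  conv_lhs => enter [2, u, 2, y]; rw [Finset.sum_comm]
  conv_lhs => enter [2, u]; rw [Finset.sum_comm]
  rw [Finset.sum_comm]
  simp only [Finset.mul_sum]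
  exact Finset.sum_congr rfl fun _ _ => Finset.sum_congr rfl fun _ _ => Finset.sum_comm

theorem sum_jointPMF_mul_logb_eq_condMI2 [Fintype 𝒳] [Fintype 𝒴] [Fintype Θ]
    (hQ1 : ∀ θ, ∑ x, Q θ x = 1) (hP1 : ∀ x, ∑ y, P x y = 1)
    (hPsym : ∀ (e : Equiv.Perm (Fin K)) (x : Fin N → Fin K → 𝒳) (y : Fin N → 𝒴),
      P (fun n k => x n (e k)) y = P x y)
    {S : KSets D K} {W : KSets D (K - i)} (hWS : W.1 ⊆ S.1) (hA : (S.1 \ W.1).card = i) :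
    ∑ z, jointPMF pri Q (fun _ x y => P (cols S x) y) z *
      logb 2 (jointPMF pri Q (fun _ x y => P (cols S x) y) z /
        jointPMF pri Q (fun t x y => condY Q P T T₁ hT hT1 hT2 t (cols W x) y) z) =
      condMI2 D K N i pri Q P T T₁ hT hT1 hT2 := by
  rw [sum_jointPMF_mul_logb_div_jointPMF, condMI2_eq hQ1 hP1]
  refine Finset.sum_congr rfl fun t _ => congrArg (prodPMF N pri t * ·) ?_
  simp_rw [P_cols_eq_assembleT P hPsym T T₁ hT hT1 hT2 hWS hA]
  exact sum_prodQ_mul_comp Q hQ1 t (Finset.orderEmbOfFin _ hA).injective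
    (W.1.orderEmbOfFin W.2).injective (orderEmbOfFin_ne_of_disjoint Finset.sdiff_disjoint _ _)
    fun u w => ∑ y, P (assembleT T T₁ hT hT1 hT2 u w) y *
      logb 2 (P (assembleT T T₁ hT hT1 hT2 u w) y / condY Q P T T₁ hT hT1 hT2 t w y)

theorem jointPMF_eq_zero_of_condY [Fintype 𝒳] (hQ0 : ∀ θ x, 0 ≤ Q θ x) (hP0 : ∀ x y, 0 ≤ P x y)
    (hPsym : ∀ (e : Equiv.Perm (Fin K)) (x : Fin N → Fin K → 𝒳) (y : Fin N → 𝒴),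
      P (fun n k => x n (e k)) y = P x y)
    {S : KSets D K} {W : KSets D (K - i)} (hWS : W.1 ⊆ S.1) (hA : (S.1 \ W.1).card = i) (z)
    (hz : jointPMF pri Q (fun t x y => condY Q P T T₁ hT hT1 hT2 t (cols W x) y) z = 0) :
    jointPMF pri Q (fun _ x y => P (cols S x) y) z = 0 := by
  obtain ⟨t, x, y⟩ := z
  by_contra h
  simp only [jointPMF, mul_eq_zero, not_or] at h hz
  obtain ⟨⟨hpri, hx⟩, hP⟩ := h
  refine (hz.resolve_left (by tauto)).not_gt ?_
  calc 0 < prodQ N i Q t (cols ⟨_, hA⟩ x) *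
        P (assembleT T T₁ hT hT1 hT2 (cols ⟨_, hA⟩ x) (cols W x)) y := by
        rw [← P_cols_eq_assembleT P hPsym T T₁ hT hT1 hT2 hWS hA]
        exact mul_pos (prodQ_comp_pos hQ0 hx _) ((hP0 _ _).lt_of_ne' hP)
    _ ≤ condY Q P T T₁ hT hT1 hT2 t (cols W x) y :=
        Finset.single_le_sum (f := fun u => prodQ N i Q t u *
          P (assembleT T T₁ hT hT1 hT2 u (cols W x)) y)
          (fun _ _ => mul_nonneg (prodQ_nonneg hQ0 _ _) (hP0 _ _)) (Finset.mem_univ _)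

end condY

theorem fano_supersets [Fintype 𝒳] [Fintype 𝒴] [Fintype Θ] {D K N i : ℕ}
    (hDK : K < D) (hi1 : 1 ≤ i) (hiK : i ≤ K)
    {pri : Θ → ℝ} (hpri0 : ∀ t, 0 ≤ pri t) (hpri1 : ∑ t, pri t = 1)
    {Q : Θ → 𝒳 → ℝ} (hQ0 : ∀ t x, 0 ≤ Q t x) (hQ1 : ∀ t, ∑ x, Q t x = 1)
    {P : (Fin N → Fin K → 𝒳) → (Fin N → 𝒴) → ℝ}
    (hP0 : ∀ x y, 0 ≤ P x y) (hP1 : ∀ x, ∑ y, P x y = 1)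
    (hPsym : ∀ (e : Equiv.Perm (Fin K)) (x : Fin N → Fin K → 𝒳) (y : Fin N → 𝒴),
      P (fun n k => x n (e k)) y = P x y)
    (T T₁ : Finset (Fin D)) (hT : T.card = K) (hT1 : T₁.card = i)
    (hT2 : (T \ T₁).card = K - i)
    (g : (Fin N → Fin D → 𝒳) → (Fin N → 𝒴) → Finset (Fin D)) (W : KSets D (K - i)) :
    (1 - (condMI2 D K N i pri Q P T T₁ hT hT1 hT2 + 1) /
        logb 2 (((D - K + i).choose i : ℕ))) * (((D - K + i).choose i : ℕ) : ℝ) ≤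
      ∑ S ∈ Finset.univ.filter (fun S : KSets D K => W.1 ⊆ S.1), ∑ t : Fin N → Θ,
        prodPMF N pri t * ∑ x : Fin N → Fin D → 𝒳, prodQ N D Q t x *
          ∑ y : Fin N → 𝒴, P (cols S x) y * (if g x y ≠ S.1 then (1:ℝ) else 0) := by
  have hcard : #(Finset.univ.filter fun S : KSets D K => W.1 ⊆ S.1) = (D - K + i).choose i := by
    rw [card_supersets W.1 (by omega), W.2]
    congr 1 <;> omega
  have hA : ∀ S : KSets D K, W.1 ⊆ S.1 → (S.1 \ W.1).card = i := fun S hWS => by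
    rw [Finset.card_sdiff_of_subset hWS, S.2, W.2]
    omega
  have hκ0 : ∀ t x y, 0 ≤ condY Q P T T₁ hT hT1 hT2 t (cols W x) y :=
    fun t x y => condY_nonneg hQ0 hP0 t _ y
  have hfano := fano_inequality _ (fun S => jointPMF pri Q fun _ x y => P (cols S x) y)
    (jointPMF pri Q fun t x y => condY Q P T T₁ hT hT1 hT2 t (cols W x) y) _
    (fun _ => jointPMF_nonneg hpri0 hQ0 fun _ _ _ => hP0 _ _)
    (fun _ _ => sum_jointPMF hpri1 hQ1 fun _ _ => hP1 _) (jointPMF_nonneg hpri0 hQ0 hκ0)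
    (sum_jointPMF hpri1 hQ1 fun t _ => sum_condY hQ1 hP1 t _).le
    (fun S hS => jointPMF_eq_zero_of_condY hQ0 hP0 hPsym (Finset.mem_filter.1 hS).2
      (hA S (Finset.mem_filter.1 hS).2))
    (fun S hS => (sum_jointPMF_mul_logb_eq_condMI2 hQ1 hP1 hPsym (Finset.mem_filter.1 hS).2
      (hA S (Finset.mem_filter.1 hS).2)).le)
    Subtype.val_injective (fun z => g z.2.1 z.2.2) (hcard ▸ two_le_choose hi1 (by omega))
  rw [hcard] at hfano
  refine hfano.trans_eq (Finset.sum_congr rfl fun S _ => ?_)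
  exact sum_jointPMF_mul _

end

theorem statement2_general
    (D K N i : ℕ) (hDK : K < D) (hi1 : 1 ≤ i) (hiK : i ≤ K)
    (pri : Θ → ℝ) (hpri0 : ∀ t, 0 ≤ pri t) (hpri1 : ∑ t, pri t = 1)
    (Q : Θ → 𝒳 → ℝ) (hQ0 : ∀ t x, 0 ≤ Q t x) (hQ1 : ∀ t, ∑ x, Q t x = 1)
    (P : (Fin N → Fin K → 𝒳) → (Fin N → 𝒴) → ℝ)
    (hP0 : ∀ x y, 0 ≤ P x y) (hP1 : ∀ x, ∑ y, P x y = 1)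
    (hPsym : ∀ (e : Equiv.Perm (Fin K)) (x : Fin N → Fin K → 𝒳) (y : Fin N → 𝒴),
      P (fun n k => x n (e k)) y = P x y)
    (T T₁ : Finset (Fin D)) (hT : T.card = K) (hT1 : T₁.card = i)
    (hT2 : (T \ T₁).card = K - i)
    (g : (Fin N → Fin D → 𝒳) → (Fin N → 𝒴) → Finset (Fin D)) :
    1 - (condMI2 D K N i pri Q P T T₁ hT hT1 hT2 + 1) /
        Real.logb 2 (((D - K + i).choose i : ℕ)) ≤
      (D.choose K : ℝ)⁻¹ * ∑ S : KSets D K, ∑ t : Fin N → Θ, prodPMF N pri t *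
        ∑ x : Fin N → Fin D → 𝒳, prodQ N D Q t x *
          ∑ y : Fin N → 𝒴, P (cols S x) y * (if g x y ≠ S.1 then (1:ℝ) else 0) := by
  set bound := 1 - (condMI2 D K N i pri Q P T T₁ hT hT1 hT2 + 1) /
    Real.logb 2 (((D - K + i).choose i : ℕ))
  have hsum := Finset.sum_le_sum fun W (_ : W ∈ Finset.univ) =>
    fano_supersets hDK hi1 hiK hpri0 hpri1 hQ0 hQ1 hP0 hP1 hPsym T T₁ hT hT1 hT2 g W
  rw [Finset.sum_const, Finset.card_univ, Fintype.card_finset_len, Fintype.card_fin,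
    nsmul_eq_mul, sum_sum_supersets] at hsum
  have hchoose : (D.choose K * K.choose (K - i) : ℝ) =
      D.choose (K - i) * ((D - K + i).choose i : ℕ) := by
    have h := Nat.choose_mul (n := D) (Nat.sub_le K i)
    rw [show D - (K - i) = D - K + i by omega, show K - (K - i) = i by omega] at h
    exact_mod_cast h
  rw [inv_mul_eq_div, le_div_iff₀ (Nat.cast_pos.2 (Nat.choose_pos hDK.le))]
  refine le_of_mul_le_mul_left ?_ (Nat.cast_pos.2 (Nat.choose_pos (Nat.sub_le K i)) :
    (0 : ℝ) < K.choose (K - i))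
  linear_combination hsum + bound * hchoose

theorem statement2
    (D K N i : ℕ) (hK : 1 ≤ K) (hDK : K < D) (hN : 1 ≤ N) (hi1 : 1 ≤ i) (hiK : i ≤ K)
    (hD2 : 2 ≤ D - K + i)
    (pri : Θ → ℝ) (hpri0 : ∀ t, 0 ≤ pri t) (hpri1 : ∑ t, pri t = 1)
    (Q : Θ → 𝒳 → ℝ) (hQ0 : ∀ t x, 0 ≤ Q t x) (hQ1 : ∀ t, ∑ x, Q t x = 1)
    (P : (Fin N → Fin K → 𝒳) → (Fin N → 𝒴) → ℝ)
    (hP0 : ∀ x y, 0 ≤ P x y) (hP1 : ∀ x, ∑ y, P x y = 1)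
    (hPsym : ∀ (e : Equiv.Perm (Fin K)) (x : Fin N → Fin K → 𝒳) (y : Fin N → 𝒴),
      P (fun n k => x n (e k)) y = P x y)
    (T T₁ : Finset (Fin D)) (hT : T.card = K) (hsub : T₁ ⊆ T) (hT1 : T₁.card = i)
    (hT2 : (T \ T₁).card = K - i)
    (g : (Fin N → Fin D → 𝒳) → (Fin N → 𝒴) → Finset (Fin D)) :
    1 - (condMI2 D K N i pri Q P T T₁ hT hT1 hT2 + 1) /
        Real.logb 2 (((D - K + i).choose i : ℕ)) ≤
      (D.choose K : ℝ)⁻¹ * ∑ S : KSets D K, ∑ t : Fin N → Θ, prodPMF N pri t *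
        ∑ x : Fin N → Fin D → 𝒳, prodQ N D Q t x *
          ∑ y : Fin N → 𝒴, P (cols S x) y * (if g x y ≠ S.1 then (1:ℝ) else 0) :=
  statement2_general D K N i hDK hi1 hiK pri hpri0 hpri1 Q hQ0 hQ1 P hP0 hP1 hPsym T T₁ hT hT1 hT2 g
end
end

section
/- Fix ρ ∈ [0,1) and σ > 0. There exist constants c > 0 and C > 0 such that the following holds: for any sequences of positive integers K(D), N(D) and positive reals SNR(D) indexed by D with 1 ≤ K(D) ≤ D/2, SNR(D) ≥ c·log D, and N(D) ≥ C·K(D)·log(D/K(D)) / log(1 + (1−ρ)σ²), one has Σ_{i=1}^{K(D)} 2^{−N(D)·f_i(D)} → 0 as D → ∞, where f_i(D) = ½·log₂( 1 + (1−ρ)·2iσ²·SNR(D)/N(D) ) − (i/(4N(D)))·log₂ 4 − (1/N(D))·log₂( C(D−K(D), i)·C(K(D), i) ). -/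
/-!
With `b = (1 - ρ)σ²`, `B_i = C(D-K, i)·C(K, i)` and `x_i = 2bi·SNR/N`, the `i`-th summand is
`2 ^ (i/2 + log₂ B_i - (N/2)·log₂(1 + x_i))`. Since `N·log₂(1 + y/N) ≥ min(y, N)`, the summand is
at most `1/D²` as soon as `i/2 + log₂ B_i + 2·log₂ D` is below both `b·i·SNR` and `N/2`, and then
the whole sum is at most `K/D² ≤ 1/D`. Against `SNR ≥ (5/b)·log₂ D` one uses `B_i ≤ D^(2i)`;
against `N ≥ 15·K·log₂(D/K)` one uses Vandermonde, `B_i ≤ C(D, K) ≤ (eD/K)^K`.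
-/

open Real Finset Filter

lemma le_logb_two_one_add {x : ℝ} (hx0 : 0 ≤ x) (hx1 : x ≤ 1) : x ≤ logb 2 (1 + x) := by
  rw [le_logb_iff_rpow_le one_lt_two (by linarith)]
  have bernoulli := rpow_one_add_le_one_add_mul_self (s := 1) (by norm_num) hx0 hx1
  norm_num at bernoulli
  linarith

lemma min_le_mul_logb_two_one_add_div {y N : ℝ} (hy : 0 ≤ y) (hN : 0 < N) :
    min y N ≤ N * logb 2 (1 + y / N) := by
  rcases le_total y N with hyN | hNy
  · rw [min_eq_left hyN]
    calc y = N * (y / N) := by field_simp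
      _ ≤ N * logb 2 (1 + y / N) := by
        gcongr
        exact le_logb_two_one_add (by positivity) ((div_le_one hN).2 hyN)
  · rw [min_eq_right hNy]
    have hlog : 1 ≤ logb 2 (1 + y / N) := by
      rw [le_logb_iff_rpow_le one_lt_two (by positivity), rpow_one]
      linarith [(one_le_div hN).2 hNy]
    nlinarith

theorem Nat.choose_mul_choose_le_add_choose (m n i : ℕ) :
    m.choose i * n.choose i ≤ (m + n).choose n := by
  rcases le_or_gt i n with hin | hni
  · rw [Nat.add_choose_eq, ← Nat.choose_symm hin]
    exact single_le_sum (f := fun ij : ℕ × ℕ => m.choose ij.1 * n.choose ij.2) (a := (i, n - i))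
      (fun _ _ => Nat.zero_le _) (mem_antidiagonal.2 (Nat.add_sub_cancel' hin))
  · simp [Nat.choose_eq_zero_of_lt hni]

lemma logb_two_exp_one_le : logb 2 (exp 1) ≤ 3 / 2 := by
  rw [logb, log_exp, div_le_iff₀ (log_pos one_lt_two)]
  linarith [log_two_gt_d9]

lemma logb_two_natCast_le_self (n : ℕ) : logb 2 n ≤ n := by
  rcases n.eq_zero_or_pos with rfl | hn
  · simp
  calc logb 2 n ≤ logb 2 ((2 : ℝ) ^ n) :=
        logb_le_logb_of_le one_lt_two (by positivity) (mod_cast Nat.lt_two_pow_self.le)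
    _ = n := by rw [logb_pow, logb_self_eq_one one_lt_two, mul_one]

lemma Nat.choose_le_exp_one_mul_div_pow (n k : ℕ) : (n.choose k : ℝ) ≤ (exp 1 * n / k) ^ k := by
  rcases k.eq_zero_or_pos with rfl | hk
  · simp
  calc (n.choose k : ℝ) ≤ n ^ k / k.factorial := Nat.choose_le_pow_div k n
    _ = (n / k) ^ k * (k ^ k / k.factorial) := by rw [div_pow]; field_simp
    _ ≤ (n / k) ^ k * exp k := by gcongr; exact pow_div_factorial_le_exp _ k.cast_nonneg k
    _ = (exp 1 * n / k) ^ k := by rw [← exp_one_pow]; ring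

lemma logb_two_choose_le {n k : ℕ} (hk : 0 < k) (hkn : k ≤ n) :
    logb 2 (n.choose k) ≤ k * logb 2 (n / k) + 3 / 2 * k := by
  have hn : (0 : ℝ) < n := mod_cast hk.trans_le hkn
  calc logb 2 (n.choose k) ≤ logb 2 ((exp 1 * n / k) ^ k) :=
        logb_le_logb_of_le one_lt_two (mod_cast Nat.choose_pos hkn)
          (Nat.choose_le_exp_one_mul_div_pow n k)
    _ = k * logb 2 (n / k) + k * logb 2 (exp 1) := by
        rw [logb_pow, mul_div_assoc, logb_mul (exp_pos 1).ne' (by positivity)]; ring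
    _ ≤ k * logb 2 (n / k) + 3 / 2 * k := by nlinarith [logb_two_exp_one_le]

/- The budget `i/2 + log₂ B_i + 2·log₂ D` is what `(N/2)·log₂(1 + x_i)` has to exceed; the share
`2·log₂ D` is what makes each summand at most `1/D²`. -/
section Budget

variable {D K i : ℕ}

lemma one_le_logb_two_natCast (hD : 2 ≤ D) : 1 ≤ logb 2 D := by
  rw [le_logb_iff_rpow_le one_lt_two (by positivity), rpow_one]
  exact_mod_cast hD

lemma budget_le_of_snr (hD : 2 ≤ D) (hi : 1 ≤ i) (hiK : i ≤ K) (hKD : 2 * K ≤ D) :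
    (i : ℝ) / 2 + logb 2 ((D - K).choose i * K.choose i : ℕ) + 2 * logb 2 D ≤
      5 * i * logb 2 D := by
  have hL := one_le_logb_two_natCast hD
  have hchoose : (D - K).choose i * K.choose i ≤ D ^ (2 * i) := calc
    _ ≤ (D - K) ^ i * K ^ i := Nat.mul_le_mul (Nat.choose_le_pow _ _) (Nat.choose_le_pow _ _)
    _ ≤ D ^ i * D ^ i := by gcongr <;> omega
    _ = D ^ (2 * i) := by ring
  have hlogb : logb 2 ((D - K).choose i * K.choose i : ℕ) ≤ 2 * i * logb 2 D := calc
    _ ≤ logb 2 ((D : ℝ) ^ (2 * i)) :=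
        logb_le_logb_of_le one_lt_two
          (mod_cast Nat.mul_pos (Nat.choose_pos (by omega)) (Nat.choose_pos hiK))
          (mod_cast hchoose)
    _ = 2 * i * logb 2 D := by rw [logb_pow]; push_cast; ring
  have hi' : (1 : ℝ) ≤ i := mod_cast hi
  nlinarith

lemma budget_le_of_samples (hi : 1 ≤ i) (hiK : i ≤ K) (hKD : 2 * K ≤ D) :
    (i : ℝ) / 2 + logb 2 ((D - K).choose i * K.choose i : ℕ) + 2 * logb 2 D ≤
      15 / 2 * K * logb 2 (D / K) := by
  have hK : (0 : ℝ) < K := mod_cast hi.trans hiK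
  have hD : (0 : ℝ) < D := mod_cast (show 0 < D by omega)
  set T := logb 2 ((D : ℝ) / K) with hT_def
  have hT : 1 ≤ T := by
    rw [le_logb_iff_rpow_le one_lt_two (by positivity), rpow_one, le_div_iff₀ hK]
    exact_mod_cast hKD
  have hlogD : logb 2 D ≤ T + K := by
    rw [hT_def, logb_div hD.ne' hK.ne']
    linarith [logb_two_natCast_le_self K]
  have hlogb : logb 2 ((D - K).choose i * K.choose i : ℕ) ≤ K * T + 3 / 2 * K := calc
    _ ≤ logb 2 (D.choose K) := by
        refine logb_le_logb_of_le one_lt_two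
          (mod_cast Nat.mul_pos (Nat.choose_pos (by omega)) (Nat.choose_pos hiK)) ?_
        have := Nat.choose_mul_choose_le_add_choose (D - K) K i
        rw [Nat.sub_add_cancel (by omega)] at this
        exact_mod_cast this
    _ ≤ K * T + 3 / 2 * K := logb_two_choose_le (by omega) (by omega)
  have hiK' : (i : ℝ) ≤ K := mod_cast hiK
  have hK1 : (1 : ℝ) ≤ K := hiK'.trans' (mod_cast hi)
  nlinarith [mul_nonneg hK.le (sub_nonneg.2 hT),
    mul_nonneg (sub_nonneg.2 hK1) (by linarith : (0 : ℝ) ≤ T)]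

lemma budget_le_half_mul_logb_two_one_add {b SNR N : ℝ} (hD : 2 ≤ D) (hi : 1 ≤ i) (hiK : i ≤ K)
    (hKD : 2 * K ≤ D) (hb : 0 < b) (hSNR : 5 / b * logb 2 D ≤ SNR)
    (hN : 15 * K * logb 2 (D / K) ≤ N) (hN0 : 0 < N) :
    (i : ℝ) / 2 + logb 2 ((D - K).choose i * K.choose i : ℕ) + 2 * logb 2 D ≤
      N / 2 * logb 2 (1 + 2 * b * i * SNR / N) := by
  have hbSNR : 5 * logb 2 D ≤ b * SNR := by
    rw [div_mul_eq_mul_div, div_le_iff₀ hb] at hSNR; linarith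
  have hy : 10 * i * logb 2 D ≤ 2 * b * i * SNR := by
    have hi' : (0 : ℝ) ≤ i := i.cast_nonneg
    nlinarith
  have hL := one_le_logb_two_natCast hD
  have hmin := min_le_mul_logb_two_one_add_div (y := 2 * b * i * SNR) (by nlinarith) hN0
  have hsnr := budget_le_of_snr hD hi hiK hKD
  have hsamples := budget_le_of_samples hi hiK hKD
  have : 2 * ((i : ℝ) / 2 + logb 2 ((D - K).choose i * K.choose i : ℕ) + 2 * logb 2 D) ≤
      min (2 * b * i * SNR) N := le_min (by linarith) (by linarith)
  linarith

end Budget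

lemma two_rpow_neg_mul_le_inv_sq {N D i ℓ β : ℝ} (hN : 0 < N) (hD : 0 < D)
    (h : i / 2 + β + 2 * logb 2 D ≤ N / 2 * ℓ) :
    (2 : ℝ) ^ (-N * (1 / 2 * ℓ - i / (4 * N) * logb 2 4 - 1 / N * β)) ≤ (D ^ 2)⁻¹ := by
  have hlogb4 : logb 2 (4 : ℝ) = 2 := by
    rw [show (4 : ℝ) = 2 ^ 2 by norm_num, logb_pow, logb_self_eq_one one_lt_two]; norm_num
  have hexp : -N * (1 / 2 * ℓ - i / (4 * N) * logb 2 4 - 1 / N * β) =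
      -(N / 2 * ℓ - i / 2 - β) := by
    rw [hlogb4]; field_simp; ring
  calc (2 : ℝ) ^ (-N * (1 / 2 * ℓ - i / (4 * N) * logb 2 4 - 1 / N * β))
      ≤ 2 ^ (-logb 2 (D ^ 2)) := by
        refine rpow_le_rpow_of_exponent_le one_le_two ?_
        rw [hexp, logb_pow]; push_cast; linarith
    _ = (D ^ 2)⁻¹ := by rw [rpow_neg zero_le_two, rpow_logb two_pos (by norm_num) (by positivity)]

theorem statement17 (ρ σ : ℝ) (hρ : ρ ∈ Set.Ico (0:ℝ) 1) (hσ : 0 < σ) :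
    ∃ c > (0:ℝ), ∃ C > (0:ℝ), ∀ (K N : ℕ → ℕ) (SNR : ℕ → ℝ),
      (∀ D : ℕ, 2 ≤ D →
        1 ≤ K D ∧ 2 * K D ≤ D ∧ 1 ≤ N D ∧ 0 < SNR D ∧
          c * Real.logb 2 D ≤ SNR D ∧
          C * (K D : ℝ) * Real.logb 2 ((D : ℝ) / (K D : ℝ)) /
              Real.logb 2 (1 + (1 - ρ) * σ^2) ≤ (N D : ℝ)) →
      Filter.Tendsto (fun D : ℕ => ∑ i ∈ Finset.Icc 1 (K D),
        (2:ℝ) ^ (-(N D : ℝ) *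
          ((1/2) * Real.logb 2 (1 + (1 - ρ) * 2 * (i:ℝ) * σ^2 * SNR D / (N D : ℝ)) -
            ((i:ℝ) / (4 * (N D : ℝ))) * Real.logb 2 4 -
            (1 / (N D : ℝ)) * Real.logb 2 (((D - K D).choose i * (K D).choose i : ℕ)))))
        Filter.atTop (nhds 0) := by
  have hb : 0 < (1 - ρ) * σ ^ 2 := mul_pos (sub_pos.2 hρ.2) (pow_pos hσ 2)
  have hlogb : 0 < logb 2 (1 + (1 - ρ) * σ ^ 2) := logb_pos one_lt_two (by linarith)
  refine ⟨5 / ((1 - ρ) * σ ^ 2), by positivity, 15 * logb 2 (1 + (1 - ρ) * σ ^ 2), by positivity,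
    fun K N SNR h => ?_⟩
  refine squeeze_zero' (Eventually.of_forall fun D => sum_nonneg fun i _ => by positivity) ?_
    tendsto_one_div_atTop_nhds_zero_nat
  filter_upwards [eventually_ge_atTop 2] with D hD
  obtain ⟨hK, hKD, hN, -, hSNR, hsamples⟩ := h D hD
  have hN0 : (0 : ℝ) < N D := mod_cast hN
  have hD0 : (0 : ℝ) < D := by positivity
  have hsamples' : 15 * K D * logb 2 (D / K D) ≤ N D := by
    convert hsamples using 1; field_simp
  refine (sum_le_sum (g := fun _ => ((D : ℝ) ^ 2)⁻¹) fun i hi => ?_).trans ?_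
  · obtain ⟨hi, hiK⟩ := mem_Icc.1 hi
    refine two_rpow_neg_mul_le_inv_sq hN0 hD0 ?_
    convert budget_le_half_mul_logb_two_one_add hD hi hiK hKD hb hSNR hsamples' hN0 using 5
    ring
  · rw [sum_const, Nat.card_Icc, Nat.add_sub_cancel, nsmul_eq_mul]
    have hKD' : (K D : ℝ) ≤ D := mod_cast (show K D ≤ D by omega)
    rw [← div_eq_mul_inv, div_le_div_iff₀ (by positivity) hD0]
    nlinarith
end
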